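/- (Growth of the limiting one-point function, eq. (asymp rho)) As Re(ξ) → +∞, ρ(ξ) ~ Re(ξ)²/2, i.e. ρ(ξ) / Re(ξ)² → 1/2, where ρ(ξ) := (1/2) ∫_{-∞}^{∞} exp( -x⁴ P( Re(ξ)/x - 1 ) ) / 𝒫(x⁴) · |x| dx. -/

import Mathlib

/-!
Write `r = Re ξ` and substitute `x = r + t/r`. Then
`x⁴ P(r/x - 1) = t²/4 + t³/(3r²) + t⁴/(8r⁴)` and `|x|/r³ = (x/r)³/x²`, while Laplace's method
(`P(y) ≈ y²/4` near its minimum) gives `x² 𝒫(x⁴) → 2√π`. Hence `ρ(ξ)/r²` is `1/2` times the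
integral of a function tending pointwise to the density `e^{-t²/4}/(2√π)`. The lower bound
`𝒫(θ) ≥ 2e^{-1/2}/(1 + √θ)`, obtained by integrating over `|y| ≤ 1/(1 + √θ)`, and
`x⁴ P(r/x - 1) ≥ t²/36` give the majorant `e^{1/2}(1 + |t|)³ e^{-t²/36}`, so dominated
convergence applies.
-/

open MeasureTheory Real Filter Topology

/-- `P(y) = y²/4 + y³/6 + y⁴/24`. -/
noncomputable def Pfun (y : ℝ) : ℝ := y^2/4 + y^3/6 + y^4/24

/-- The Pearcey-like integral `𝒫(θ) = ∫_ℝ e^(-θ P(y)) dy`. -/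
noncomputable def Pearcey (θ : ℝ) : ℝ := ∫ y : ℝ, Real.exp (-θ * Pfun y)

/-- The limiting one-point function `ρ(ξ) = (1/2) ∫ exp(-x⁴P(Re ξ/x - 1))/𝒫(x⁴) |x| dx`. -/
noncomputable def ρlim (ξ : ℂ) : ℝ :=
  (1/2) * ∫ x : ℝ, Real.exp (-x^4 * Pfun (ξ.re / x - 1)) / Pearcey (x^4) * |x|

@[fun_prop]
lemma continuous_Pfun : Continuous Pfun := by
  unfold Pfun; fun_prop

lemma sq_div_twelve_le_Pfun (y : ℝ) : y^2/12 ≤ Pfun y := by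
  unfold Pfun; nlinarith [sq_nonneg (y^2 + 2*y)]

lemma Pfun_le_sq_div_two {y : ℝ} (hy : |y| ≤ 1) : Pfun y ≤ y^2/2 := by
  rw [abs_le] at hy
  unfold Pfun
  nlinarith [mul_nonneg (mul_nonneg (sq_nonneg y) (sub_nonneg.2 hy.2))
    (neg_le_iff_add_nonneg.1 hy.1)]

lemma integrable_exp_neg_mul_Pfun {θ : ℝ} (hθ : 0 < θ) :
    Integrable fun y => exp (-θ * Pfun y) := by
  refine (integrable_exp_neg_mul_sq (div_pos hθ (by norm_num : (0:ℝ) < 12))).mono'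
    (by fun_prop) (.of_forall fun y => ?_)
  rw [norm_of_nonneg (exp_pos _).le, exp_le_exp]
  nlinarith [sq_div_twelve_le_Pfun y]

@[fun_prop]
lemma measurable_Pearcey : Measurable Pearcey :=
  (continuous_exp.comp (continuous_fst.neg.mul (continuous_Pfun.comp continuous_snd))
    ).stronglyMeasurable.integral_prod_right'.measurable

lemma two_mul_exp_neg_half_div_le_Pearcey {θ : ℝ} (hθ : 0 < θ) :
    2 * exp (-1/2) / (1 + √θ) ≤ Pearcey θ := by
  set δ := 1 / (1 + √θ)
  have hδ : 0 < δ := by positivity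
  have hδ_le_one : δ ≤ 1 := div_le_one_of_le₀ (by linarith [sqrt_nonneg θ]) (by positivity)
  have hθδ : θ * δ^2 ≤ 1 := by
    have : √θ * δ ≤ 1 := by
      rw [mul_one_div, div_le_one (by positivity)]; linarith
    calc θ * δ^2 = (√θ * δ)^2 := by rw [mul_pow, sq_sqrt hθ.le]
      _ ≤ 1 := pow_le_one₀ (by positivity) this
  have hIcc : ∀ y ∈ Set.Icc (-δ) δ, exp (-1/2) ≤ exp (-θ * Pfun y) := fun y hy => by
    have hy : |y| ≤ δ := abs_le.2 hy
    have hy2 : y^2 ≤ δ^2 := sq_le_sq' (abs_le.1 hy).1 (abs_le.1 hy).2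
    have := Pfun_le_sq_div_two (hy.trans hδ_le_one)
    rw [exp_le_exp]; nlinarith
  calc 2 * exp (-1/2) / (1 + √θ) = exp (-1/2) * volume.real (Set.Icc (-δ) δ) := by
        rw [Real.volume_real_Icc_of_le (by linarith)]; ring
    _ ≤ ∫ y in Set.Icc (-δ) δ, exp (-θ * Pfun y) :=
        setIntegral_ge_of_const_le_real measurableSet_Icc measure_Icc_lt_top.ne hIcc
          (integrable_exp_neg_mul_Pfun hθ).integrableOn
    _ ≤ Pearcey θ :=
        setIntegral_le_integral (integrable_exp_neg_mul_Pfun hθ)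
          (.of_forall fun _ => (exp_pos _).le)

lemma Pearcey_pos {θ : ℝ} (hθ : 0 < θ) : 0 < Pearcey θ :=
  (by positivity : (0:ℝ) < 2 * exp (-1/2) / (1 + √θ)).trans_le
    (two_mul_exp_neg_half_div_le_Pearcey hθ)

lemma sq_mul_Pfun_div {s : ℝ} (hs : s ≠ 0) (z : ℝ) :
    s^2 * Pfun (z / s) = z^2/4 + z^3/6 * s⁻¹ + z^4/24 * s⁻¹^2 := by
  unfold Pfun; field_simp

lemma tendsto_sq_mul_Pfun_div (z : ℝ) :
    Tendsto (fun s => s^2 * Pfun (z / s)) atTop (𝓝 (z^2/4)) := by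
  have h : Tendsto (fun u : ℝ => z^2/4 + z^3/6 * u + z^4/24 * u^2) (𝓝 0) (𝓝 (z^2/4)) := by
    simpa using
      ((by fun_prop : Continuous fun u : ℝ => z^2/4 + z^3/6 * u + z^4/24 * u^2).tendsto 0)
  refine (h.comp tendsto_inv_atTop_zero).congr' ?_
  filter_upwards [eventually_ne_atTop 0] with s hs
  exact (sq_mul_Pfun_div hs z).symm

lemma integral_exp_neg_sq_mul_Pfun_div {s : ℝ} (hs : 0 < s) :
    ∫ z, exp (-(s^2 * Pfun (z / s))) = s * Pearcey (s^2) := by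
  simp_rw [← neg_mul]
  rw [Measure.integral_comp_div (fun y => exp (-s^2 * Pfun y)), abs_of_pos hs, smul_eq_mul,
    Pearcey]

lemma integral_exp_neg_sq_div_four : ∫ z : ℝ, exp (-(z^2/4)) = 2 * √π := by
  have h : (fun z : ℝ => exp (-(z^2/4))) = fun z => exp (-(1/4) * z^2) := by
    ext z; ring_nf
  rw [h, integral_gaussian, show π / (1/4) = 2^2 * π by ring, sqrt_mul (by norm_num),
    sqrt_sq (by norm_num)]

lemma tendsto_mul_Pearcey_sq : Tendsto (fun s => s * Pearcey (s^2)) atTop (𝓝 (2 * √π)) := by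
  rw [← integral_exp_neg_sq_div_four]
  refine (tendsto_integral_filter_of_dominated_convergence
    (F := fun s z => exp (-(s^2 * Pfun (z / s)))) (fun z => exp (-(1/12) * z^2))
    (.of_forall fun s => by fun_prop) ?_ (integrable_exp_neg_mul_sq (by norm_num))
    (.of_forall fun z => (continuous_exp.tendsto _).comp (tendsto_sq_mul_Pfun_div z).neg)
    ).congr' ?_
  · filter_upwards [eventually_gt_atTop 0] with s hs
    refine .of_forall fun z => ?_
    rw [norm_of_nonneg (exp_pos _).le, exp_le_exp]
    have h := mul_le_mul_of_nonneg_left (sq_div_twelve_le_Pfun (z / s)) (sq_nonneg s)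
    have hz : s^2 * ((z / s)^2 / 12) = z^2 / 12 := by field_simp
    linarith
  · filter_upwards [eventually_gt_atTop 0] with s hs using integral_exp_neg_sq_mul_Pfun_div hs

lemma tendsto_sq_mul_Pearcey_pow_four :
    Tendsto (fun x => x^2 * Pearcey (x^4)) atTop (𝓝 (2 * √π)) := by
  simpa only [Function.comp_def, ← pow_mul] using
    tendsto_mul_Pearcey_sq.comp (tendsto_pow_atTop two_ne_zero)

-- `ρlim ξ = 1/2 * ∫ x, ρIntegrand ξ.re x` holds by `rfl`.
noncomputable def ρIntegrand (r x : ℝ) : ℝ :=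
  exp (-x^4 * Pfun (r / x - 1)) / Pearcey (x^4) * |x|

lemma measurable_ρIntegrand (r : ℝ) : Measurable (ρIntegrand r) := by
  unfold ρIntegrand; fun_prop

lemma ρIntegrand_nonneg (r x : ℝ) : 0 ≤ ρIntegrand r x :=
  mul_nonneg (div_nonneg (exp_pos _).le (integral_nonneg fun _ => (exp_pos _).le)) (abs_nonneg x)

lemma integral_ρIntegrand_div_sq {r : ℝ} (hr : 0 < r) :
    (∫ x, ρIntegrand r x) / r^2 = ∫ t, ρIntegrand r (r + t / r) / r^3 := by
  rw [integral_div, Measure.integral_comp_div (fun y => ρIntegrand r (r + y)),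
    integral_add_left_eq_self, abs_of_pos hr, smul_eq_mul]
  field_simp

lemma pow_four_mul_Pfun_eq {r t : ℝ} (hr : r ≠ 0) (hx : r + t / r ≠ 0) :
    (r + t / r)^4 * Pfun (r / (r + t / r) - 1) =
      t^2/4 + t^3/3 * (r^2)⁻¹ + t^4/8 * ((r^2)⁻¹)^2 := by
  have hrt : r^2 + t ≠ 0 := fun h => hx (by
    rw [show r + t / r = (r^2 + t) / r by field_simp, h, zero_div])
  unfold Pfun
  field_simp
  ring

lemma sq_div_thirtysix_le (t u : ℝ) : t^2/36 ≤ t^2/4 + t^3/3 * u + t^4/8 * u^2 := by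
  nlinarith [sq_nonneg (4*t + 3*t^2*u)]

lemma ρIntegrand_rescaled_eq {r t : ℝ} (hr : r ≠ 0) (hx : 0 < r + t / r) :
    ρIntegrand r (r + t / r) / r^3 = exp (-(t^2/4 + t^3/3 * (r^2)⁻¹ + t^4/8 * ((r^2)⁻¹)^2))
      * (1 + t * (r^2)⁻¹)^3 / ((r + t / r)^2 * Pearcey ((r + t / r)^4)) := by
  have hP := (Pearcey_pos (pow_pos hx 4)).ne'
  rw [ρIntegrand, neg_mul, pow_four_mul_Pfun_eq hr hx.ne', abs_of_pos hx]
  field_simp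

lemma tendsto_ρIntegrand_rescaled (t : ℝ) :
    Tendsto (fun r => ρIntegrand r (r + t / r) / r^3) atTop
      (𝓝 (exp (-(t^2/4)) / (2 * √π))) := by
  have hx : Tendsto (fun r : ℝ => r + t / r) atTop atTop :=
    tendsto_id.atTop_add (tendsto_const_nhds.div_atTop tendsto_id)
  have hu : Tendsto (fun r : ℝ => (r^2)⁻¹) atTop (𝓝 0) :=
    tendsto_inv_atTop_zero.comp (tendsto_pow_atTop two_ne_zero)
  have hnum : Tendsto (fun u => exp (-(t^2/4 + t^3/3 * u + t^4/8 * u^2)) * (1 + t * u)^3)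
      (𝓝 0) (𝓝 (exp (-(t^2/4)))) := by
    simpa using ((by fun_prop : Continuous fun u : ℝ =>
      exp (-(t^2/4 + t^3/3 * u + t^4/8 * u^2)) * (1 + t * u)^3).tendsto 0)
  refine ((hnum.comp hu).div (tendsto_sq_mul_Pearcey_pow_four.comp hx)
    (by positivity)).congr' ?_
  filter_upwards [eventually_ne_atTop 0, hx.eventually_gt_atTop 0] with r hr hxr
  exact (ρIntegrand_rescaled_eq hr hxr).symm

lemma inv_Pearcey_pow_four_le {x : ℝ} (hx : x ≠ 0) :
    (Pearcey (x^4))⁻¹ ≤ exp (1/2) * (1 + x^2) / 2 := by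
  have h := two_mul_exp_neg_half_div_le_Pearcey (by positivity : 0 < x^4)
  rw [show x^4 = (x^2)^2 by ring, sqrt_sq (sq_nonneg x)] at h
  rw [inv_le_comm₀ (Pearcey_pos (by positivity)) (by positivity)]
  calc (exp (1/2) * (1 + x^2) / 2)⁻¹ = 2 * exp (-1/2) / (1 + x^2) := by
        rw [show (-1/2 : ℝ) = -(1/2) by ring, exp_neg]; field_simp
    _ ≤ Pearcey ((x^2)^2) := h
    _ = Pearcey (x^4) := by ring_nf

lemma ρIntegrand_rescaled_le {r : ℝ} (hr : 1 ≤ r) (t : ℝ) :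
    ρIntegrand r (r + t / r) / r^3 ≤ exp (1/2) * ((1 + |t|)^3 * exp (-(t^2/36))) := by
  set x := r + t / r
  have hr0 : 0 < r := by linarith
  rcases eq_or_ne x 0 with hx | hx
  · rw [hx, ρIntegrand, abs_zero, mul_zero, zero_div]; positivity
  have hx_le : |x| ≤ r * (1 + |t|) := by
    have : |t / r| ≤ |t| := by
      rw [abs_div, abs_of_pos hr0]; exact div_le_self (abs_nonneg t) hr
    calc |x| ≤ |r| + |t / r| := abs_add_le _ _
      _ ≤ r * (1 + |t|) := by rw [abs_of_pos hr0]; nlinarith [abs_nonneg t]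
  have hsq : 1 + x^2 ≤ 2 * r^2 * (1 + |t|)^2 := by
    have h1 : x^2 ≤ (r * (1 + |t|))^2 := by
      rw [← sq_abs]; exact pow_le_pow_left₀ (abs_nonneg x) hx_le 2
    have h2 : 1 ≤ (r * (1 + |t|))^2 := one_le_pow₀ (by nlinarith [abs_nonneg t])
    nlinarith
  have hexp : exp (-x^4 * Pfun (r / x - 1)) ≤ exp (-(t^2/36)) := by
    rw [exp_le_exp, neg_mul, neg_le_neg_iff, pow_four_mul_Pfun_eq hr0.ne' hx]
    exact sq_div_thirtysix_le t _
  calc ρIntegrand r x / r^3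
      = exp (-x^4 * Pfun (r / x - 1)) * (Pearcey (x^4))⁻¹ * |x| / r^3 := by
        rw [ρIntegrand]; ring
    _ ≤ exp (-(t^2/36)) * (exp (1/2) * (2 * r^2 * (1 + |t|)^2) / 2) * (r * (1 + |t|)) / r^3 := by
        gcongr
        · exact inv_nonneg.2 (Pearcey_pos (by positivity)).le
        · exact (inv_Pearcey_pow_four_le hx).trans (by gcongr)
    _ = exp (1/2) * ((1 + |t|)^3 * exp (-(t^2/36))) := by
        field_simp

lemma integrable_one_add_abs_pow_three_mul_exp_neg_sq :
    Integrable fun t : ℝ => (1 + |t|)^3 * exp (-(t^2/36)) := by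
  refine ((integrable_exp_neg_mul_sq (by norm_num : (0:ℝ) < 1/72)).const_mul (exp 162)).mono'
    (by fun_prop) (.of_forall fun t => ?_)
  have hpow : (1 + |t|)^3 ≤ exp (3 * |t|) := by
    calc (1 + |t|)^3 ≤ exp |t| ^ 3 := by
          gcongr; linarith [add_one_le_exp |t|]
      _ = exp (3 * |t|) := by rw [← exp_nat_mul]; norm_num
  rw [norm_of_nonneg (by positivity), ← exp_add]
  calc (1 + |t|)^3 * exp (-(t^2/36)) ≤ exp (3 * |t|) * exp (-(t^2/36)) := by gcongr
    _ = exp (3 * |t| - t^2/36) := by rw [← exp_add]; ring_nf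
    _ ≤ exp (162 + -(1/72) * t^2) := by
        rw [exp_le_exp]; nlinarith [sq_nonneg (|t| - 108), sq_abs t]

lemma tendsto_integral_ρIntegrand_rescaled :
    Tendsto (fun r => ∫ t, ρIntegrand r (r + t / r) / r^3) atTop (𝓝 1) := by
  have h : ∫ t, exp (-(t^2/4)) / (2 * √π) = 1 := by
    rw [integral_div, integral_exp_neg_sq_div_four, div_self (by positivity)]
  rw [← h]
  refine tendsto_integral_filter_of_dominated_convergence _ (.of_forall fun r =>
    (((measurable_ρIntegrand r).comp (by fun_prop)).div_const _).aestronglyMeasurable) ?_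
    (integrable_one_add_abs_pow_three_mul_exp_neg_sq.const_mul (exp (1/2)))
    (.of_forall tendsto_ρIntegrand_rescaled)
  filter_upwards [eventually_ge_atTop 1] with r hr
  refine .of_forall fun t => ?_
  rw [norm_of_nonneg (div_nonneg (ρIntegrand_nonneg _ _) (by positivity))]
  exact ρIntegrand_rescaled_le hr t

/-- **eq. (asymp rho).** Growth of the limiting one-point function:
`ρ(ξ)/Re(ξ)² → 1/2` as `Re(ξ) → +∞`. -/
theorem stmt_17 :
    Filter.Tendsto (fun ξ : ℂ => ρlim ξ / ξ.re ^ 2)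
      (Filter.comap Complex.re Filter.atTop) (nhds (1/2)) := by
  have h : Tendsto (fun r => 1/2 * (∫ x, ρIntegrand r x) / r^2) atTop (𝓝 (1/2)) := by
    have h1 : Tendsto (fun r => 1/2 * ∫ t, ρIntegrand r (r + t / r) / r^3) atTop (𝓝 (1/2)) := by
      simpa using tendsto_integral_ρIntegrand_rescaled.const_mul (1/2 : ℝ)
    refine h1.congr' ?_
    filter_upwards [eventually_gt_atTop 0] with r hr
    rw [mul_div_assoc, integral_ρIntegrand_div_sq hr]
  exact h.comp tendsto_comap
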